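/- arXiv:1405.4081 — 3 statements merged into one kernel-verified Lean document; each statement's English description precedes it below -/
import Mathlib

section
/- For any bounded measurable function f on (ℝ^d)^{n-1}, the conditional expectation of f(X_{1:n-1}) given X_0 = x_0 and X_n = x_n equals the expectation, under the law of the chain started at x_0, of f(X_{1:n-1}) · ∏_{k=1}^{n-1} G_k(X_{k-1}, X_k), where G_k(x_{k-1}, x_k) = p(x_n | x_k) / p(x_n | x_{k-1}). -/
open MeasureTheory Finset

/-- The full path `x_0, x_1, ..., x_{n-1}, x_n` obtained by extending the
intermediate path `y = x_{1:n-1}` with the fixed endpoints `x_0` and `x_n`. -/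
def pathExt {D : Type*} (n : ℕ) (x0 xn : D) (y : Fin (n - 1) → D) (k : ℕ) : D :=
  if _h0 : k = 0 then x0 else if h : k ≤ n - 1 then y ⟨k - 1, by omega⟩ else xn

lemma telescope_prod (m : ℕ) (g : ℕ → ℝ) (hg : ∀ k, k ≤ m → g k ≠ 0) :
    (∏ k ∈ Finset.Icc 1 m, g k / g (k - 1)) = g m / g 0 := by
  induction m with
  | zero => simp [div_self (hg 0 le_rfl)]
  | succ m ih =>
    rw [Finset.prod_Icc_succ_top (by omega : 1 ≤ m + 1),
      ih (fun k hk => hg k (by omega))]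
    have hm : g m ≠ 0 := hg m (by omega)
    simp only [Nat.add_sub_cancel]
    rw [div_mul_div_comm, mul_comm (g m) (g (m + 1)), mul_div_mul_right _ _ hm]

/-- Proposition 1 of Del Moral & Murray (2014): for bounded measurable `f`,
`E[f(X_{1:n-1}) | x_0, x_n] = E[f(X_{1:n-1}) ∏_{k=1}^{n-1} G_k(X_{k-1:k}) | x_0]`
with `G_k(x_{k-1:k}) = p(x_n | x_k) / p(x_n | x_{k-1})`. -/
theorem bridge_expectation_exact
    (d n : ℕ) (hn : 2 ≤ n) (x0 xn : Fin d → ℝ)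
    (p : ℕ → (Fin d → ℝ) → (Fin d → ℝ) → ℝ)
    (PN : ℕ → (Fin d → ℝ) → ℝ)
    (f : (Fin (n - 1) → Fin d → ℝ) → ℝ)
    (hf_meas : Measurable f) (hf_bdd : ∃ C, ∀ y, |f y| ≤ C)
    (hppos : ∀ k z w, 0 < p k z w)
    (hPNtop : ∀ z, PN (n - 1) z = p n z xn)
    (hPNrec : ∀ k, k < n - 1 → ∀ z,
      PN k z = ∫ w, p (k + 1) z w * PN (k + 1) w ∂volume)
    (hpos : ∀ (y : Fin (n - 1) → Fin d → ℝ) k, k ≤ n - 1 →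
      0 < PN k (pathExt n x0 xn y k)) :
    (∫ y : Fin (n - 1) → Fin d → ℝ,
        f y * (p n (pathExt n x0 xn y (n - 1)) xn *
          (∏ k ∈ Finset.Icc 1 (n - 1),
            p k (pathExt n x0 xn y (k - 1)) (pathExt n x0 xn y k)) / PN 0 x0)) =
      ∫ y : Fin (n - 1) → Fin d → ℝ,
        f y * (∏ k ∈ Finset.Icc 1 (n - 1),
            PN k (pathExt n x0 xn y k) / PN (k - 1) (pathExt n x0 xn y (k - 1))) *
          ∏ k ∈ Finset.Icc 1 (n - 1),
            p k (pathExt n x0 xn y (k - 1)) (pathExt n x0 xn y k) := by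
  congr 1
  funext y
  have h0 : pathExt n x0 xn y 0 = x0 := by simp [pathExt]
  have htel := telescope_prod (n - 1) (fun k => PN k (pathExt n x0 xn y k))
    (fun k hk => (hpos y k hk).ne')
  rw [htel, h0, hPNtop]
  ring
end

section
/- For any bounded measurable function f on (ℝ^d)^{n-1} and any strictly positive weight functions q(x_n | x_k), k = 0,...,n-1, the conditional expectation E[f(X_{1:n-1}) | X_0 = x_0, X_n = x_n] equals the ratio E[f(X_{1:n-1}) p(x_n | X_{n-1}) (q(x_n | x_0)/q(x_n | X_{n-1})) ∏_{k=1}^{n-1} H_k(X_{k-1}, X_k) | X_0 = x_0] / E[p(x_n | X_{n-1}) (q(x_n | x_0)/q(x_n | X_{n-1})) ∏_{k=1}^{n-1} H_k(X_{k-1}, X_k) | X_0 = x_0], where H_k(x_{k-1}, x_k) = q(x_n | x_k)/q(x_n | x_{k-1}), provided the denominator is nonzero. -/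
open MeasureTheory Finset

/-- Proposition 2 of Del Moral & Murray (2014): for bounded measurable `f` and
arbitrary strictly positive weight functions `q(x_n | x_k)`, the bridge
expectation `E[f(X_{1:n-1}) | x_0, x_n]` equals the ratio of the weighted
expectations with weights
`p(x_n | X_{n-1}) (q(x_n | x_0)/q(x_n | X_{n-1})) ∏_{k=1}^{n-1} H_k(X_{k-1:k})`,
where `H_k(x_{k-1:k}) = q(x_n | x_k)/q(x_n | x_{k-1})`. -/
theorem bridge_expectation_importance
    (d n : ℕ) (hn : 2 ≤ n) (x0 xn : Fin d → ℝ)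
    (p : ℕ → (Fin d → ℝ) → (Fin d → ℝ) → ℝ)
    (q : ℕ → (Fin d → ℝ) → ℝ)
    (f : (Fin (n - 1) → Fin d → ℝ) → ℝ)
    (hf_meas : Measurable f) (hf_bdd : ∃ C, ∀ y, |f y| ≤ C)
    (hppos : ∀ k z w, 0 < p k z w)
    (hq : ∀ k z, 0 < q k z)
    (hZ : 0 < ∫ y : Fin (n - 1) → Fin d → ℝ,
        p n (pathExt n x0 xn y (n - 1)) xn *
          ∏ k ∈ Finset.Icc 1 (n - 1),
            p k (pathExt n x0 xn y (k - 1)) (pathExt n x0 xn y k))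
    (hden : (∫ y : Fin (n - 1) → Fin d → ℝ,
        (p n (pathExt n x0 xn y (n - 1)) xn *
            (q 0 x0 / q (n - 1) (pathExt n x0 xn y (n - 1))) *
          ∏ k ∈ Finset.Icc 1 (n - 1),
            q k (pathExt n x0 xn y k) / q (k - 1) (pathExt n x0 xn y (k - 1))) *
          ∏ k ∈ Finset.Icc 1 (n - 1),
            p k (pathExt n x0 xn y (k - 1)) (pathExt n x0 xn y k)) ≠ 0) :
    (∫ y : Fin (n - 1) → Fin d → ℝ,
        f y * (p n (pathExt n x0 xn y (n - 1)) xn *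
          (∏ k ∈ Finset.Icc 1 (n - 1),
            p k (pathExt n x0 xn y (k - 1)) (pathExt n x0 xn y k)) /
          ∫ y' : Fin (n - 1) → Fin d → ℝ,
            p n (pathExt n x0 xn y' (n - 1)) xn *
              ∏ k ∈ Finset.Icc 1 (n - 1),
                p k (pathExt n x0 xn y' (k - 1)) (pathExt n x0 xn y' k))) =
      (∫ y : Fin (n - 1) → Fin d → ℝ,
          f y * (p n (pathExt n x0 xn y (n - 1)) xn *
              (q 0 x0 / q (n - 1) (pathExt n x0 xn y (n - 1))) *
            ∏ k ∈ Finset.Icc 1 (n - 1),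
              q k (pathExt n x0 xn y k) / q (k - 1) (pathExt n x0 xn y (k - 1))) *
            ∏ k ∈ Finset.Icc 1 (n - 1),
              p k (pathExt n x0 xn y (k - 1)) (pathExt n x0 xn y k)) /
        ∫ y : Fin (n - 1) → Fin d → ℝ,
          (p n (pathExt n x0 xn y (n - 1)) xn *
              (q 0 x0 / q (n - 1) (pathExt n x0 xn y (n - 1))) *
            ∏ k ∈ Finset.Icc 1 (n - 1),
              q k (pathExt n x0 xn y k) / q (k - 1) (pathExt n x0 xn y (k - 1))) *
            ∏ k ∈ Finset.Icc 1 (n - 1),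
              p k (pathExt n x0 xn y (k - 1)) (pathExt n x0 xn y k) := by
  have key : ∀ y : Fin (n - 1) → Fin d → ℝ,
      (p n (pathExt n x0 xn y (n - 1)) xn *
          (q 0 x0 / q (n - 1) (pathExt n x0 xn y (n - 1))) *
        ∏ k ∈ Finset.Icc 1 (n - 1),
          q k (pathExt n x0 xn y k) / q (k - 1) (pathExt n x0 xn y (k - 1)))
      = p n (pathExt n x0 xn y (n - 1)) xn := by
    intro y
    have P0 : pathExt n x0 xn y 0 = x0 := by simp [pathExt]
    have tel : ∀ m : ℕ, ∏ k ∈ Finset.Icc 1 m,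
        q k (pathExt n x0 xn y k) / q (k - 1) (pathExt n x0 xn y (k - 1))
        = q m (pathExt n x0 xn y m) / q 0 (pathExt n x0 xn y 0) := by
      intro m
      induction m with
      | zero => simp [div_self (hq 0 _).ne']
      | succ m ih =>
        rw [Finset.prod_Icc_succ_top (by omega), ih]
        have h0 := (hq 0 (pathExt n x0 xn y 0)).ne'
        have h2 := (hq m (pathExt n x0 xn y m)).ne'
        simp only [Nat.add_sub_cancel]
        field_simp
    rw [tel (n - 1), P0]
    have h1 := (hq 0 x0).ne'
    have h2 := (hq (n - 1) (pathExt n x0 xn y (n - 1))).ne'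
    field_simp
  simp only [key] at hden ⊢
  simp only [← mul_div_assoc]
  rw [integral_div]
  congr 1
  · apply integral_congr_ae
    filter_upwards with y
    ring
end

section
/- The conditional acceptance rate CAR(z^{1:Z}) = (1/Z)(2 ∑_{i=1}^Z c^i − 1), where c^i is the normalized sum of the i smallest elements of z^{1:Z} (i.e., c^i = (∑_{j=1}^i z^{(j)}) / ∑_{j=1}^Z z^{(j)} with z^{(1)} ≤ ... ≤ z^{(Z)} the order statistics), satisfies 1/Z ≤ CAR(z^{1:Z}) ≤ 1, and CAR(z^{1:Z}) = 1 if and only if all z^i are equal. -/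
open Finset

/-- Bounds and equality case for the conditional acceptance rate
`CAR(z^{1:Z}) = (1/Z)(2 ∑_i c^i − 1)`, where `c^i` is the normalised sum of
the `i` smallest elements of `z^{1:Z}`. The sorted rearrangement is given by a
permutation `σ` with `z ∘ σ` monotone. -/
theorem car_bounds
    (Z : ℕ) (hZ : 1 ≤ Z) (z : Fin Z → ℝ) (hz : ∀ i, 0 < z i)
    (σ : Equiv.Perm (Fin Z)) (hσ : Monotone (z ∘ σ))
    (c : Fin Z → ℝ)
    (hc : ∀ i, c i = (∑ j ∈ Finset.Iic i, z (σ j)) / ∑ j, z j)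
    (CAR : ℝ)
    (hCAR : CAR = (1 / (Z : ℝ)) * (2 * ∑ i, c i - 1)) :
    1 / (Z : ℝ) ≤ CAR ∧ CAR ≤ 1 ∧ (CAR = 1 ↔ ∀ i j, z i = z j) := by
  have hZ0 : (0:ℝ) < Z := by exact_mod_cast hZ
  set S : ℝ := ∑ j, z j with hS
  have hSpos : 0 < S := Finset.sum_pos (fun i _ => hz i) ⟨⟨0, hZ⟩, mem_univ _⟩
  -- each c i is nonneg and bounded by (i+1)/Z
  have hc_nonneg : ∀ i, 0 ≤ c i := by
    intro i
    rw [hc i]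
    exact div_nonneg (Finset.sum_nonneg fun j _ => (hz _).le) hSpos.le
  -- key inequality : Z * partial sum ≤ (i+1) * S
  have key : ∀ i : Fin Z, (Z:ℝ) * ∑ j ∈ Iic i, z (σ j) ≤ ((i:ℝ)+1) * S := by
    intro i
    set P : ℝ := ∑ j ∈ Iic i, z (σ j) with hP
    have hcardI : (Iic i).card = (i:ℕ) + 1 := Fin.card_Iic i
    have hcardC : (Iic i)ᶜ.card = Z - ((i:ℕ)+1) := by
      rw [card_compl, hcardI, Fintype.card_fin]
    have hPle : P ≤ ((i:ℕ)+1 : ℕ) • z (σ i) := by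
      rw [← hcardI]
      exact Finset.sum_le_card_nsmul _ _ _
        (fun j hj => hσ (mem_Iic.mp hj))
    have hQge : ((Z - ((i:ℕ)+1) : ℕ)) • z (σ i) ≤ ∑ j ∈ (Iic i)ᶜ, z (σ j) := by
      rw [← hcardC]
      refine Finset.card_nsmul_le_sum _ _ _ (fun j hj => ?_)
      have : ¬ j ≤ i := by simpa using hj
      exact hσ (le_of_lt (lt_of_not_ge this))
    have hsplit : P + ∑ j ∈ (Iic i)ᶜ, z (σ j) = S := by
      rw [hP, Finset.sum_add_sum_compl, hS]
      exact Equiv.sum_comp σ z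
    have hiZ : ((i:ℕ)+1 : ℝ) ≤ Z := by exact_mod_cast i.isLt
    have hcast : ((Z - ((i:ℕ)+1) : ℕ) : ℝ) = (Z:ℝ) - ((i:ℝ)+1) := by
      rw [Nat.cast_sub i.isLt]; push_cast; ring
    rw [nsmul_eq_mul] at hPle hQge
    push_cast at hPle
    rw [hcast] at hQge
    nlinarith [hz (σ i), hPle, hQge, hsplit]
  have hc_le : ∀ i : Fin Z, c i ≤ ((i:ℝ)+1) / Z := by
    intro i
    rw [hc i, div_le_div_iff₀ hSpos hZ0]
    nlinarith [key i]
  -- Gauss sum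
  have hgauss : ∑ i : Fin Z, (((i:ℕ):ℝ)+1) = (Z:ℝ) * (Z+1) / 2 := by
    have h1 : ∑ i : Fin Z, (((i:ℕ):ℝ)+1) = ((∑ i ∈ range Z, (i+1) : ℕ) : ℝ) := by
      rw [Fin.sum_univ_eq_sum_range (fun i => ((i:ℝ)+1))]
      push_cast
      exact Finset.sum_congr rfl fun x _ => by ring
    have h2 : (∑ i ∈ range Z, (i+1)) = ∑ i ∈ range (Z+1), i := by
      rw [Finset.sum_range_succ' (fun i => i) Z]
      simp
    have h3 := Finset.sum_range_id_mul_two (Z+1)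
    rw [h1, h2]
    have : ((∑ i ∈ range (Z+1), i : ℕ) : ℝ) * 2 = (Z+1) * Z := by
      exact_mod_cast congrArg (Nat.cast : ℕ → ℝ) h3
    linarith
  have hsum_le : ∑ i, c i ≤ ((Z:ℝ)+1)/2 := by
    calc ∑ i, c i ≤ ∑ i : Fin Z, (((i:ℕ):ℝ)+1)/Z :=
          Finset.sum_le_sum (fun i _ => hc_le i)
      _ = (∑ i : Fin Z, (((i:ℕ):ℝ)+1))/Z := by rw [Finset.sum_div]
      _ = ((Z:ℝ)+1)/2 := by rw [hgauss]; field_simp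
  -- the top index
  have hZ1 : Z - 1 < Z := Nat.sub_lt hZ one_pos
  set top : Fin Z := ⟨Z-1, hZ1⟩ with htop
  have hIic_top : Iic top = univ := by
    apply Finset.eq_univ_iff_forall.mpr
    intro j
    exact mem_Iic.mpr (Nat.le_pred_of_lt j.isLt)
  have hc_top : c top = 1 := by
    rw [hc top, hIic_top, Equiv.sum_comp σ z, ← hS, div_self hSpos.ne']
  have hsum_ge : (1:ℝ) ≤ ∑ i, c i := by
    rw [← hc_top]
    exact Finset.single_le_sum (fun i _ => hc_nonneg i) (mem_univ top)
  refine ⟨?_, ?_, ?_⟩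
  · rw [hCAR]
    rw [div_le_iff₀ hZ0]
    have : (1:ℝ)/Z * Z = 1 := by field_simp
    nlinarith [hsum_ge]
  · rw [hCAR]
    rw [div_mul_eq_mul_div, div_le_one hZ0]
    nlinarith [hsum_le]
  · constructor
    · intro h1
      -- sum of c equals (Z+1)/2
      have hsum_eq : ∑ i, c i = ((Z:ℝ)+1)/2 := by
        rw [hCAR] at h1
        field_simp at h1
        linarith
      have hEq : ∀ i ∈ (univ : Finset (Fin Z)), c i = (((i:ℕ):ℝ)+1)/Z := by
        refine (Finset.sum_eq_sum_iff_of_le (fun i _ => hc_le i)).mp ?_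
        rw [hsum_eq, ← Finset.sum_div, hgauss]
        field_simp
      -- z (σ 0) = S / Z
      have h0 : z (σ ⟨0, hZ⟩) = S / Z := by
        have := hEq ⟨0, hZ⟩ (mem_univ _)
        rw [hc] at this
        have hI0 : Iic (⟨0, hZ⟩ : Fin Z) = {⟨0, hZ⟩} := by
          ext j; simp [Fin.le_def, Fin.ext_iff, Nat.le_zero]
        rw [hI0, Finset.sum_singleton] at this
        simp only [Fin.val_mk, Nat.cast_zero, zero_add] at this
        field_simp at this ⊢
        linarith
      have hmin : ∀ j : Fin Z, S / Z ≤ z (σ j) := by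
        intro j
        rw [← h0]
        exact hσ (by exact Fin.mk_le_of_le_val (Nat.zero_le _))
      have hall : ∀ j ∈ (univ : Finset (Fin Z)), S/Z = z (σ j) := by
        refine (Finset.sum_eq_sum_iff_of_le (fun j _ => hmin j)).mp ?_
        rw [Equiv.sum_comp σ z, ← hS, Finset.sum_const, card_univ, Fintype.card_fin,
          nsmul_eq_mul]
        field_simp
      intro i j
      have hi := hall (σ.symm i) (mem_univ _)
      have hj := hall (σ.symm j) (mem_univ _)
      simp only [Equiv.apply_symm_apply] at hi hj
      rw [← hi, ← hj]
    · intro h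
      -- all z equal
      have hzc : ∀ i, z i = z ⟨0, hZ⟩ := fun i => h i _
      have hci : ∀ i : Fin Z, c i = (((i:ℕ):ℝ)+1)/Z := by
        intro i
        rw [hc i]
        have hSv : S = Z * z ⟨0, hZ⟩ := by
          rw [hS]
          rw [Finset.sum_congr rfl (fun i _ => hzc i), Finset.sum_const, card_univ,
            Fintype.card_fin, nsmul_eq_mul]
        have hPv : ∑ j ∈ Iic i, z (σ j) = (((i:ℕ):ℝ)+1) * z ⟨0, hZ⟩ := by
          rw [Finset.sum_congr rfl (fun j _ => hzc (σ j)), Finset.sum_const, Fin.card_Iic,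
            nsmul_eq_mul]
          push_cast; ring
        rw [hPv, hSv]
        have := (hz ⟨0, hZ⟩).ne'
        field_simp
      rw [hCAR, Finset.sum_congr rfl (fun i _ => hci i), ← Finset.sum_div, hgauss]
      field_simp
      ring
end
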